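/- arXiv:2207.11787 — 2 statements merged into one kernel-verified Lean document; each statement's English description precedes it below -/
import Mathlib

section
/- Let T ∈ Aut([0,1], ℬ, μ) and let (n_k^{(1)})_{k∈ℕ} and (n_k^{(2)})_{k∈ℕ} be strictly increasing sequences in ℕ such that for all measurable A, B ⊆ [0,1], lim_{k→∞} μ(A ∩ T^{−n_k^{(1)}} B) = μ(A ∩ B) and lim_{k→∞} μ(A ∩ T^{−2 n_k^{(2)}} B) = μ(A) μ(B). Then lim_{k→∞} |n_k^{(1)} − n_k^{(2)}| = ∞. -/
open MeasureTheory Filter Topology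

noncomputable section

/-- An invertible Lebesgue-measure-preserving transformation of `[0,1]`. -/
structure Aut01 : Type where
  toEquiv : unitInterval ≃ unitInterval
  measurePreserving_toFun :
    MeasurePreserving toEquiv (volume : Measure unitInterval) volume
  measurePreserving_invFun :
    MeasurePreserving toEquiv.symm (volume : Measure unitInterval) volume

namespace Aut01

/-- The correlation `μ(A ∩ T^{-m} B)` (as a real number). -/
def corr (T : Aut01) (m : ℤ) (A B : Set unitInterval) : ℝ :=
  (volume (A ∩ ⇑(T.toEquiv ^ m : Equiv.Perm unitInterval) ⁻¹' B)).toReal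

/-- The dyadic interval `[k/2^ℓ, (k+1)/2^ℓ)` of rank `ℓ`, as a subset of `[0,1]`. -/
def dyadic (ℓ k : ℕ) : Set unitInterval :=
  {x | (k : ℝ) / 2 ^ ℓ ≤ (x : ℝ) ∧ (x : ℝ) < ((k : ℝ) + 1) / 2 ^ ℓ}

/-- The metric `∂(T,S) = Σ_{ℓ≥1} 2^{-2ℓ} Σ_{E of rank ℓ} μ(TE △ SE)` inducing the weak
topology on `Aut01`. -/
def wDist (T S : Aut01) : ℝ :=
  ∑' ℓ : ℕ,
    (1 / 2 ^ (2 * (ℓ + 1)) : ℝ) *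
      ∑ k ∈ Finset.range (2 ^ (ℓ + 1)),
        (volume (symmDiff (T.toEquiv '' dyadic (ℓ + 1) k) (S.toEquiv '' dyadic (ℓ + 1) k))).toReal

/-- The weak topology on `Aut01`, generated by the balls of the metric `wDist`. -/
instance : TopologicalSpace Aut01 :=
  TopologicalSpace.generateFrom
    {U | ∃ (T : Aut01) (ε : ℝ), 0 < ε ∧ U = {S | wDist T S < ε}}

/-- `T` is aperiodic: the set of periodic points has measure zero. -/
def Aperiodic (T : Aut01) : Prop :=
  volume {x : unitInterval |
    ∃ n : ℕ, 0 < n ∧ (T.toEquiv ^ n : Equiv.Perm unitInterval) x = x} = 0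

/-- `T` is weakly mixing. -/
def WeaklyMixing (T : Aut01) : Prop :=
  ∀ A B : Set unitInterval, MeasurableSet A → MeasurableSet B →
    Tendsto
      (fun M : ℕ =>
        (1 / (M : ℝ)) *
          ∑ n ∈ Finset.Icc 1 M,
            |T.corr (n : ℤ) A B - (volume A).toReal * (volume B).toReal|)
      atTop (𝓝 0)

end Aut01


/-!
Suppose `|n₁ k - n₂ k|` does not tend to infinity. Then some difference `d` occurs infinitely
often, and along those `k` we have `2 n₁ k = 2 n₂ k + 2 d`. Rigidity along `n₁` passes to `2 n₁`
(since `T^{-2n}B` is close to `T^{-n}B`, which is close to `B`), while mixing along `2 n₂` passes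
to the shift `2 n₂ + 2 d`. A single sequence along which `T` is both rigid and mixing forces
`μ(B) = μ(B)²` for every measurable `B`, which fails for `B = [0, 1/2]`.
-/

open Set

open scoped symmDiff

theorem Int.exists_frequently_eq_of_not_tendsto_abs {u : ℕ → ℤ}
    (h : ¬ Tendsto (fun k => |u k|) atTop atTop) : ∃ d, ∃ᶠ k in atTop, u k = d := by
  by_contra! hne
  refine h ((tendsto_abs_atBot_atTop.sup tendsto_abs_atTop_atTop).comp ?_)
  rw [← Int.cofinite_eq]
  exact le_cofinite_iff_eventually_ne.mpr hne

theorem MeasureTheory.measureReal_symmDiff_eq_of_measureReal_eq {α : Type*} [MeasurableSpace α]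
    {μ : Measure α} [IsFiniteMeasure μ] {s t : Set α} (hs : MeasurableSet s)
    (ht : MeasurableSet t) (h : μ.real s = μ.real t) :
    μ.real (s ∆ t) = 2 * (μ.real t - μ.real (t ∩ s)) := by
  have hs' := measureReal_sdiff_add_inter (μ := μ) (s := s) ht
  have ht' := measureReal_sdiff_add_inter (μ := μ) (s := t) hs
  rw [measureReal_symmDiff_eq hs ht, inter_comm s t] at *
  linarith

namespace Aut01

variable (T : Aut01)

theorem measurePreserving_zpow (m : ℤ) :
    MeasurePreserving ⇑(T.toEquiv ^ m : Equiv.Perm unitInterval) volume volume := by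
  cases m with
  | ofNat n =>
    rw [Int.ofNat_eq_natCast, zpow_natCast, Equiv.Perm.coe_pow]
    exact T.measurePreserving_toFun.iterate n
  | negSucc n =>
    rw [zpow_negSucc, ← inv_pow, Equiv.Perm.coe_pow]
    exact T.measurePreserving_invFun.iterate (n + 1)

theorem corr_add (m c : ℤ) (A B : Set unitInterval) :
    T.corr (m + c) A B = T.corr m A (⇑(T.toEquiv ^ c : Equiv.Perm unitInterval) ⁻¹' B) := by
  rw [corr, corr, add_comm, zpow_add, Equiv.Perm.coe_mul, preimage_comp]

theorem abs_corr_sub_corr_le (m : ℤ) {A B C : Set unitInterval} (hA : MeasurableSet A)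
    (hB : MeasurableSet B) (hC : MeasurableSet C) :
    |T.corr m A B - T.corr m A C| ≤ volume.real (B ∆ C) := by
  have hT := T.measurePreserving_zpow m
  calc |T.corr m A B - T.corr m A C|
      ≤ volume.real ((A ∩ _ ⁻¹' B) ∆ (A ∩ _ ⁻¹' C)) :=
        abs_measureReal_sub_le_measureReal_symmDiff
          (hA.inter (hT.measurable hB)).nullMeasurableSet
          (hA.inter (hT.measurable hC)).nullMeasurableSet
    _ ≤ volume.real (_ ⁻¹' (B ∆ C)) := by
        rw [← inter_symmDiff_distrib_left, ← preimage_symmDiff]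
        exact measureReal_mono inter_subset_right
    _ = volume.real (B ∆ C) := hT.measureReal_preimage (hB.symmDiff hC).nullMeasurableSet

def RigidAlong (m : ℕ → ℤ) : Prop :=
  ∀ A B : Set unitInterval, MeasurableSet A → MeasurableSet B →
    Tendsto (fun k => T.corr (m k) A B) atTop (𝓝 ((volume (A ∩ B)).toReal))

def MixingAlong (m : ℕ → ℤ) : Prop :=
  ∀ A B : Set unitInterval, MeasurableSet A → MeasurableSet B →
    Tendsto (fun k => T.corr (m k) A B) atTop (𝓝 ((volume A).toReal * (volume B).toReal))

variable {T} {m : ℕ → ℤ}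

theorem RigidAlong.comp (h : T.RigidAlong m) {φ : ℕ → ℕ} (hφ : Tendsto φ atTop atTop) :
    T.RigidAlong (m ∘ φ) :=
  fun A B hA hB => (h A B hA hB).comp hφ

theorem MixingAlong.comp (h : T.MixingAlong m) {φ : ℕ → ℕ} (hφ : Tendsto φ atTop atTop) :
    T.MixingAlong (m ∘ φ) :=
  fun A B hA hB => (h A B hA hB).comp hφ

theorem RigidAlong.tendsto_measureReal_preimage_symmDiff (h : T.RigidAlong m)
    {B : Set unitInterval} (hB : MeasurableSet B) :
    Tendsto (fun k => volume.real ((⇑(T.toEquiv ^ m k : Equiv.Perm unitInterval) ⁻¹' B) ∆ B))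
      atTop (𝓝 0) := by
  have hBB : Tendsto (fun k => 2 * (volume.real B - T.corr (m k) B B)) atTop
      (𝓝 (2 * (volume.real B - volume.real B))) := by
    have hlim := h B B hB hB
    rw [inter_self] at hlim
    exact (tendsto_const_nhds.sub hlim).const_mul 2
  rw [sub_self, mul_zero] at hBB
  refine hBB.congr fun k => ?_
  have hT := T.measurePreserving_zpow (m k)
  exact (measureReal_symmDiff_eq_of_measureReal_eq (hT.measurable hB) hB
    (hT.measureReal_preimage hB.nullMeasurableSet)).symm

theorem RigidAlong.two_mul (h : T.RigidAlong m) : T.RigidAlong (fun k => 2 * m k) := by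
  intro A B hA hB
  have herror : Tendsto (fun k => T.corr (2 * m k) A B - T.corr (m k) A B) atTop (𝓝 0) := by
    refine squeeze_zero_norm (fun k => ?_) (h.tendsto_measureReal_preimage_symmDiff hB)
    rw [_root_.two_mul, corr_add, Real.norm_eq_abs]
    exact T.abs_corr_sub_corr_le (m k) hA ((T.measurePreserving_zpow (m k)).measurable hB) hB
  simpa only [add_sub_cancel, add_zero] using (h A B hA hB).add herror

theorem MixingAlong.add_const (h : T.MixingAlong m) (c : ℤ) :
    T.MixingAlong (fun k => m k + c) := by
  intro A B hA hB
  have hT := T.measurePreserving_zpow c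
  simp_rw [corr_add]
  rw [← hT.measure_preimage hB.nullMeasurableSet]
  exact h A _ hA (hT.measurable hB)

theorem RigidAlong.not_mixingAlong (h : T.RigidAlong m) : ¬ T.MixingAlong m := by
  intro hmix
  set B : Set unitInterval := Iic ⟨1 / 2, by norm_num, by norm_num⟩
  have hB : MeasurableSet B := measurableSet_Iic
  have hvol : (volume B).toReal = 1 / 2 := by
    rw [unitInterval.volume_Iic, ENNReal.toReal_ofReal (by norm_num)]
  have hlim := tendsto_nhds_unique (h B B hB hB) (hmix B B hB hB)
  rw [inter_self, hvol] at hlim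
  norm_num at hlim

end Aut01

theorem stmt_6_general (T : Aut01) (n₁ n₂ : ℕ → ℕ)
    (hrigid : ∀ A B : Set unitInterval, MeasurableSet A → MeasurableSet B →
      Tendsto (fun k => T.corr ((n₁ k : ℤ)) A B) atTop (𝓝 ((volume (A ∩ B)).toReal)))
    (hmix : ∀ A B : Set unitInterval, MeasurableSet A → MeasurableSet B →
      Tendsto (fun k => T.corr (2 * (n₂ k : ℤ)) A B) atTop
        (𝓝 ((volume A).toReal * (volume B).toReal))) :
    Tendsto (fun k => |(n₁ k : ℤ) - (n₂ k : ℤ)|) atTop atTop := by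
  by_contra h
  obtain ⟨d, hd⟩ := Int.exists_frequently_eq_of_not_tendsto_abs h
  obtain ⟨φ, hφ, hφd⟩ := extraction_of_frequently_atTop hd
  have hrigid₂ : T.RigidAlong (fun k => 2 * (n₁ k : ℤ)) := Aut01.RigidAlong.two_mul hrigid
  have hmix₂ : T.MixingAlong (fun k => 2 * (n₂ k : ℤ)) := hmix
  have hshift : (fun k => 2 * (n₁ k : ℤ)) ∘ φ = fun j => 2 * (n₂ (φ j) : ℤ) + 2 * d := by
    funext j
    simp only [Function.comp_apply, ← hφd j]
    ring
  refine (hrigid₂.comp hφ.tendsto_atTop).not_mixingAlong ?_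
  rw [hshift]
  exact (hmix₂.comp hφ.tendsto_atTop).add_const (2 * d)

/-- If `T` is rigid along a strictly increasing `(n_k^{(1)})` and mixing
along `(2 n_k^{(2)})` for a strictly increasing `(n_k^{(2)})`, then
`|n_k^{(1)} - n_k^{(2)}| → ∞`. -/
theorem stmt_6 (T : Aut01) (n₁ n₂ : ℕ → ℕ) (hn₁ : StrictMono n₁) (hn₂ : StrictMono n₂)
    (hrigid : ∀ A B : Set unitInterval, MeasurableSet A → MeasurableSet B →
      Tendsto (fun k => T.corr ((n₁ k : ℤ)) A B) atTop (𝓝 ((volume (A ∩ B)).toReal)))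
    (hmix : ∀ A B : Set unitInterval, MeasurableSet A → MeasurableSet B →
      Tendsto (fun k => T.corr (2 * (n₂ k : ℤ)) A B) atTop
        (𝓝 ((volume A).toReal * (volume B).toReal))) :
    Tendsto (fun k => |(n₁ k : ℤ) - (n₂ k : ℤ)|) atTop atTop :=
  stmt_6_general T n₁ n₂ hrigid hmix
end
end

section
/- Let (m_k)_{k∈ℕ} be a strictly increasing sequence in ℕ. Then the set ⋂_{q∈ℕ} ⋃_{k∈ℕ} {α ∈ ℝ : |e^{2πi m_k α} − 1| < 1/q} is a dense G_δ subset of ℝ; consequently, there exist an irrational number α ∈ ℝ and a strictly increasing sequence (n_k)_{k∈ℕ} in ℕ such that m_{n_k} α mod 1 → 0, i.e. the distance from m_{n_k} α to the nearest integer tends to 0 as k → ∞. -/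
/-!
For every `N`, the points `α` with `m_k α ∈ ℤ` for some `k ≥ N` are dense, since `m_k → ∞`.
A Baire category argument then shows that for residually many `α` the point `1` is a cluster
value of `e^{2πi m_k α}`; this residual set lies in `⋂_q ⋃_k {α : |e^{2πi m_k α} - 1| < 1/q}`,
and it meets the (residual) irrationals. Along a subsequence converging to `1`, the estimate
`4 |r - round r| ≤ |e^{2πir} - 1|` gives `m_{n_k} α → 0` mod `1`.
-/

open Filter Topology Metric Set

section ClusterValues

variable {X Y : Type*} [PseudoMetricSpace Y]

theorem setOf_mapClusterPt_eq (u : ℕ → X → Y) (y : Y) :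
    {x | MapClusterPt y atTop (u · x)} =
      ⋂ q : ℕ, ⋂ N : ℕ, ⋃ k ≥ N, u k ⁻¹' ball y (1 / (q + 1)) := by
  ext x
  simp [nhds_basis_ball_inv_nat_succ.mapClusterPt_iff_frequently, frequently_atTop]

theorem mem_residual_setOf_mapClusterPt [TopologicalSpace X] {u : ℕ → X → Y} {y : Y}
    (hu : ∀ k, Continuous (u k)) (hdense : ∀ N, Dense {x | ∃ k ≥ N, u k x = y}) :
    {x | MapClusterPt y atTop (u · x)} ∈ residual X := by
  rw [setOf_mapClusterPt_eq]
  refine countable_iInter_mem.2 fun q => countable_iInter_mem.2 fun N =>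
    residual_of_dense_open (isOpen_biUnion fun k _ => isOpen_ball.preimage (hu k)) ?_
  refine (hdense N).mono ?_
  rintro x ⟨k, hk, hx⟩
  exact mem_biUnion hk (by simp [hx, Nat.cast_add_one_pos])

end ClusterValues

theorem dense_setOf_exists_mul_eq_intCast {m : ℕ → ℝ} (hm : Tendsto m atTop atTop) (N : ℕ) :
    Dense {x : ℝ | ∃ k ≥ N, ∃ j : ℤ, m k * x = j} := by
  refine Metric.dense_iff.2 fun x r hr => ?_
  obtain ⟨k, hkm, hkN⟩ := ((hm.eventually_gt_atTop (1 / r)).and (eventually_ge_atTop N)).exists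
  have hmk : 0 < m k := (one_div_pos.2 hr).trans hkm
  refine ⟨round (m k * x) / m k, ?_, k, hkN, round (m k * x), by field_simp⟩
  have hround := abs_sub_round (m k * x)
  rw [div_lt_iff₀ hr] at hkm
  rw [mem_ball, Real.dist_eq, div_sub' hmk.ne', abs_div, abs_of_pos hmk, div_lt_iff₀ hmk,
    abs_sub_comm]
  linarith

theorem abs_sub_round_le_norm_exp_sub_one (r : ℝ) :
    4 * |r - round r| ≤ ‖Complex.exp (2 * Real.pi * Complex.I * r) - 1‖ := by
  have hnorm :
      ‖Complex.exp (2 * Real.pi * Complex.I * r) - 1‖ = 2 * |Real.sin (Real.pi * r)| := by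
    rw [show 2 * Real.pi * Complex.I * r = Complex.I * ((2 * Real.pi * r : ℝ) : ℂ) by
        push_cast; ring, Complex.norm_exp_I_mul_ofReal_sub_one, norm_mul, Real.norm_two,
      Real.norm_eq_abs]
    ring_nf
  have hperiodic : |Real.sin (Real.pi * r)| = |Real.sin (Real.pi * (r - round r))| := by
    rw [mul_sub, mul_comm Real.pi (round r : ℝ), Real.sin_sub_int_mul_pi, abs_mul,
      abs_neg_one_zpow, one_mul]
  have hjordan := Real.mul_abs_le_abs_sin (x := Real.pi * (r - round r)) (by
    rw [abs_mul, abs_of_pos Real.pi_pos]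
    nlinarith [abs_sub_round r, Real.pi_pos])
  rw [abs_mul, abs_of_pos Real.pi_pos, ← mul_assoc, div_mul_cancel₀ _ Real.pi_ne_zero] at hjordan
  rw [hnorm, hperiodic]
  linarith

theorem tendsto_abs_sub_round_of_tendsto_exp {ι : Type*} {l : Filter ι} {x : ι → ℝ}
    (hx : Tendsto (fun i => Complex.exp (2 * Real.pi * Complex.I * x i)) l (𝓝 1)) :
    Tendsto (fun i => |x i - round (x i)|) l (𝓝 0) := by
  refine squeeze_zero (fun i => abs_nonneg _) (fun i => ?_)
    (by simpa using (tendsto_iff_norm_sub_tendsto_zero.1 hx).div_const 4)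
  linarith [abs_sub_round_le_norm_exp_sub_one (x i)]

/-- For a strictly increasing `(m_k)` in ℕ, the set
`⋂_{q≥1} ⋃_k {α : |e^{2πi m_k α} - 1| < 1/q}` is a dense `G_δ` subset of ℝ;
consequently there exist an irrational `α` and a strictly increasing `(n_k)` with
the distance from `m_{n_k} α` to the nearest integer tending to `0`. -/
theorem stmt_15 (m : ℕ → ℕ) (hm : StrictMono m) :
    (IsGδ (⋂ q : ℕ, ⋃ k : ℕ,
        {α : ℝ | ‖
          (Complex.exp (2 * Real.pi * Complex.I * ((m k : ℝ) * α)) - 1)‖ < 1 / (q + 1)}) ∧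
      Dense (⋂ q : ℕ, ⋃ k : ℕ,
        {α : ℝ | ‖
          (Complex.exp (2 * Real.pi * Complex.I * ((m k : ℝ) * α)) - 1)‖ < 1 / (q + 1)})) ∧
    ∃ α : ℝ, Irrational α ∧ ∃ n : ℕ → ℕ, StrictMono n ∧
      Tendsto (fun k => |(m (n k) : ℝ) * α - (round ((m (n k) : ℝ) * α) : ℤ)|)
        atTop (𝓝 0) := by
  set e : ℕ → ℝ → ℂ := fun k α => Complex.exp (2 * Real.pi * Complex.I * ((m k : ℝ) * α))
  have hcluster : {α | MapClusterPt 1 atTop (e · α)} ∈ residual ℝ := by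
    have hm' : Tendsto (fun k => (m k : ℝ)) atTop atTop :=
      tendsto_natCast_atTop_atTop.comp hm.tendsto_atTop
    refine mem_residual_setOf_mapClusterPt (fun k => by fun_prop) fun N =>
      (dense_setOf_exists_mul_eq_intCast hm' N).mono ?_
    rintro α ⟨k, hk, j, hj⟩
    refine ⟨k, hk, Complex.exp_eq_one_iff.2 ⟨j, ?_⟩⟩
    rw [← Complex.ofReal_mul, hj, Complex.ofReal_intCast]
    ring
  have hsubset : {α | MapClusterPt 1 atTop (e · α)} ⊆
      ⋂ q : ℕ, ⋃ k : ℕ, {α : ℝ | ‖e k α - 1‖ < 1 / (q + 1)} := by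
    rw [setOf_mapClusterPt_eq]
    refine iInter_mono fun q α hα => ?_
    obtain ⟨k, -, hk⟩ := mem_iUnion₂.1 (mem_iInter.1 hα 0)
    exact mem_iUnion.2 ⟨k, by simpa [dist_eq_norm] using hk⟩
  have hopen (q k : ℕ) : IsOpen {α : ℝ | ‖e k α - 1‖ < 1 / (q + 1)} :=
    isOpen_lt (by fun_prop) (by fun_prop)
  refine ⟨⟨.iInter_of_isOpen fun q => isOpen_iUnion (hopen q),
    dense_of_mem_residual (mem_of_superset hcluster hsubset)⟩, ?_⟩
  obtain ⟨α, hα, hirr⟩ :=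
    (dense_of_mem_residual (inter_mem hcluster eventually_residual_irrational)).nonempty
  obtain ⟨n, hn, hlim⟩ := MapClusterPt.tendsto_subseq hα
  refine ⟨α, hirr, n, hn, tendsto_abs_sub_round_of_tendsto_exp ?_⟩
  simpa [e, Function.comp_def] using hlim
end
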